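/- Let n ≥ 1, u ∈ (0, n/(n+2)), and choose an integer N > n with (N − n/2)(1 − (n+2)u/n) ≥ u. Let 0 ≤ ρ ≤ 1, j ≥ 0, and set l_j = 2^{−ju} w(2^{j+2})^{u−1} and L_j = 2 + 2^{j(1−ρ)}(w(2^{j+2})/2^j)^{2u/n}, where w : (0,∞) → (0,∞) satisfies (w(t)/t)^u ≤ (2A)^{1+u} for all t ≥ 1 (A > 1). Then (1 + 2^{jρ} L_j l_j)^{n/2 − N} ≤ C(A,u,n,N) · (w(2^{j+2})/2^j)^u. -/
import Mathlib

open Real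

/-- Inequality (w2): with `l_j = 2^{-ju} w(2^{j+2})^{u-1}` and
`L_j = 2 + 2^{j(1-ρ)}(w(2^{j+2})/2^j)^{2u/n}`, if `(w(t)/t)^u ≤ (2A)^{1+u}` for `t ≥ 1`, and
`N > n` is an integer with `(N - n/2)(1 - (n+2)u/n) ≥ u`, then
`(1 + 2^{jρ} L_j l_j)^{n/2 - N} ≤ C · (w(2^{j+2})/2^j)^u`. -/
theorem stmt_16 (n : ℕ) (hn : 1 ≤ n) (u A : ℝ) (hu0 : 0 < u)
    (hu : u < (n : ℝ) / ((n : ℝ) + 2)) (hA : 1 < A)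
    (N : ℕ) (hNn : n < N)
    (hN : u ≤ ((N : ℝ) - (n : ℝ) / 2) * (1 - ((n : ℝ) + 2) / (n : ℝ) * u)) :
    ∃ C : ℝ, 0 < C ∧
      ∀ (ρ : ℝ), 0 ≤ ρ → ρ ≤ 1 →
      ∀ (w : ℝ → ℝ), (∀ t : ℝ, 0 < t → 0 < w t) →
        (∀ t : ℝ, 1 ≤ t → (w t / t) ^ u ≤ (2 * A) ^ (1 + u)) →
        ∀ j : ℕ,
          (1 + (2 : ℝ) ^ ((j : ℝ) * ρ) *
              (2 + (2 : ℝ) ^ ((j : ℝ) * (1 - ρ)) *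
                (w ((2 : ℝ) ^ (j + 2)) / (2 : ℝ) ^ (j : ℝ)) ^ (2 * u / (n : ℝ))) *
              ((2 : ℝ) ^ (-(j : ℝ) * u) * (w ((2 : ℝ) ^ (j + 2))) ^ (u - 1)))
            ^ ((n : ℝ) / 2 - (N : ℝ))
          ≤ C * (w ((2 : ℝ) ^ (j + 2)) / (2 : ℝ) ^ (j : ℝ)) ^ u := by
  have hn0 : (0 : ℝ) < n := by exact_mod_cast hn
  set α : ℝ := ((n : ℝ) + 2) / n * u - 1 with hα
  set p : ℝ := (n : ℝ) / 2 - N with hp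
  have hαp : α * p = ((N : ℝ) - (n : ℝ) / 2) * (1 - ((n : ℝ) + 2) / (n : ℝ) * u) := by ring
  set e : ℝ := α * p - u with he_def
  have he : 0 ≤ e := by rw [he_def, hαp]; linarith
  set M : ℝ := 4 * (2 * A) ^ ((1 + u) / u) with hM_def
  have hM1 : (1 : ℝ) < M := by
    have : (1 : ℝ) ≤ (2 * A) ^ ((1 + u) / u) :=
      Real.one_le_rpow (by linarith) (by positivity)
    nlinarith
  have hM0 : (0 : ℝ) < M := by linarith
  refine ⟨M ^ e, by positivity, ?_⟩
  intro ρ hρ0 hρ1 w hw hwA j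
  set W : ℝ := w ((2 : ℝ) ^ (j + 2)) with hW_def
  have hW : 0 < W := hw _ (by positivity)
  set x : ℝ := W / (2 : ℝ) ^ (j : ℝ) with hx_def
  have h2j : (0 : ℝ) < (2 : ℝ) ^ (j : ℝ) := Real.rpow_pos_of_pos two_pos _
  have hx : 0 < x := div_pos hW h2j
  -- x ≤ M
  have hxM : x ≤ M := by
    have h1 : (1 : ℝ) ≤ (2 : ℝ) ^ (j + 2) := one_le_pow₀ (by norm_num)
    have hbound := hwA _ h1
    have hxu : x ^ u = 4 ^ u * (W / (2 : ℝ) ^ (j + 2)) ^ u := by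
      rw [← Real.mul_rpow (by norm_num) (by positivity)]
      congr 1
      rw [hx_def]
      have : ((2 : ℝ) ^ (j + 2)) = 4 * (2 : ℝ) ^ (j : ℝ) := by
        rw [Real.rpow_natCast]; ring
      rw [this]; field_simp
    have hMu : M ^ u = 4 ^ u * (2 * A) ^ (1 + u) := by
      rw [hM_def, Real.mul_rpow (by norm_num) (by positivity),
        ← Real.rpow_mul (by positivity), div_mul_cancel₀ _ hu0.ne']
    have : x ^ u ≤ M ^ u := by
      rw [hxu, hMu]
      have h4 : (0 : ℝ) < (4 : ℝ) ^ u := by positivity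
      exact mul_le_mul_of_nonneg_left hbound h4.le
    exact (Real.rpow_le_rpow_iff hx.le hM0.le hu0).mp this
  -- main term equals x ^ α
  have hWx : W = x * (2 : ℝ) ^ (j : ℝ) := by rw [hx_def]; field_simp
  have key : (2 : ℝ) ^ ((j : ℝ) * ρ) *
      ((2 : ℝ) ^ ((j : ℝ) * (1 - ρ)) * x ^ (2 * u / (n : ℝ))) *
      ((2 : ℝ) ^ (-(j : ℝ) * u) * W ^ (u - 1)) = x ^ α := by
    rw [hWx, Real.mul_rpow hx.le h2j.le]
    rw [show (2 : ℝ) ^ ((j : ℝ) * ρ) *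
        ((2 : ℝ) ^ ((j : ℝ) * (1 - ρ)) * x ^ (2 * u / (n : ℝ))) *
        ((2 : ℝ) ^ (-(j : ℝ) * u) * (x ^ (u - 1) * ((2 : ℝ) ^ (j : ℝ)) ^ (u - 1))) =
        ((2 : ℝ) ^ ((j : ℝ) * ρ) * (2 : ℝ) ^ ((j : ℝ) * (1 - ρ)) *
          (2 : ℝ) ^ (-(j : ℝ) * u) * ((2 : ℝ) ^ (j : ℝ)) ^ (u - 1)) *
        (x ^ (2 * u / (n : ℝ)) * x ^ (u - 1)) from by ring]
    rw [← Real.rpow_mul (by norm_num : (0:ℝ) ≤ 2),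
      ← Real.rpow_add two_pos, ← Real.rpow_add two_pos, ← Real.rpow_add two_pos,
      ← Real.rpow_add hx]
    rw [show (j : ℝ) * ρ + (j : ℝ) * (1 - ρ) + -(j : ℝ) * u + (j : ℝ) * (u - 1) = 0 from by ring]
    rw [Real.rpow_zero, one_mul]
    have hexp : 2 * u / (n : ℝ) + (u - 1) = α := by rw [hα]; field_simp; ring
    rw [hexp]
  set S : ℝ := (2 : ℝ) ^ ((j : ℝ) * ρ) *
      (2 + (2 : ℝ) ^ ((j : ℝ) * (1 - ρ)) * x ^ (2 * u / (n : ℝ))) *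
      ((2 : ℝ) ^ (-(j : ℝ) * u) * W ^ (u - 1)) with hS_def
  have hxαS : x ^ α ≤ 1 + S := by
    have h1 : x ^ α ≤ S := by
      rw [← key, hS_def]
      have ha : (0 : ℝ) < (2 : ℝ) ^ ((j : ℝ) * ρ) := Real.rpow_pos_of_pos two_pos _
      have hb : (0 : ℝ) < (2 : ℝ) ^ (-(j : ℝ) * u) * W ^ (u - 1) := by positivity
      have hc : (2 : ℝ) ^ ((j : ℝ) * (1 - ρ)) * x ^ (2 * u / (n : ℝ)) ≤
          2 + (2 : ℝ) ^ ((j : ℝ) * (1 - ρ)) * x ^ (2 * u / (n : ℝ)) := by linarith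
      gcongr
    linarith
  have hxα : (0 : ℝ) < x ^ α := Real.rpow_pos_of_pos hx _
  have hp0 : p ≤ 0 := by
    have : (n : ℝ) < N := by exact_mod_cast hNn
    rw [hp]; linarith
  have step1 : (1 + S) ^ p ≤ (x ^ α) ^ p :=
    Real.rpow_le_rpow_of_nonpos hxα hxαS hp0
  have step2 : (x ^ α) ^ p = x ^ u * x ^ e := by
    rw [← Real.rpow_mul hx.le, ← Real.rpow_add hx]
    congr 1; rw [he_def]; ring
  have step3 : x ^ e ≤ M ^ e := Real.rpow_le_rpow hx.le hxM he
  calc (1 + S) ^ p ≤ x ^ u * x ^ e := by rw [← step2]; exact step1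
    _ ≤ x ^ u * M ^ e := by
        have : (0:ℝ) ≤ x ^ u := (Real.rpow_pos_of_pos hx _).le
        exact mul_le_mul_of_nonneg_left step3 this
    _ = M ^ e * x ^ u := by ring
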